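/- Let S̃ be a set of commuting Pauli operators on N qubits and G̃ a disjoint set of pseudo-generators whose generated group equals the centralizer of S̃ in the Pauli group modulo phases. Then |G̃| = N. -/
import Mathlib


/-- Pauli operators on `n` qubits modulo phases, encoded symplectically:
each qubit carries an (X-part, Z-part) pair in `ZMod 2`. Multiplication is addition. -/
abbrev Pauli (n : ℕ) : Type := Fin n → ZMod 2 × ZMod 2

namespace Pauli

/-- The symplectic form encoding commutation: `0` iff the operators commute. -/
def sform {n : ℕ} (a b : Pauli n) : ZMod 2 :=
  ∑ i, ((a i).1 * (b i).2 + (a i).2 * (b i).1)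

/-- Two Pauli operators commute. -/
def PComm {n : ℕ} (a b : Pauli n) : Prop := sform a b = 0

/-- The weight of a Pauli operator: number of qubits on which it acts non-trivially. -/
def weight {n : ℕ} (a : Pauli n) : ℕ :=
  (Finset.univ.filter fun i => a i ≠ 0).card

/-- `(a,b)` is a conjugal pair in relation to the set `X`: `a` and `b` anti-commute,
and each commutes with every member of `X` other than its partner. -/
def ConjugalPair {n : ℕ} (a b : Pauli n) (X : Set (Pauli n)) : Prop :=
  ¬ PComm a b ∧ (∀ x ∈ X, x ≠ b → PComm a x) ∧ (∀ x ∈ X, x ≠ a → PComm b x)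

/-- `e` is an undetectable error with respect to `S` acting on `l`:
it commutes with all of `S` and anti-commutes with `l`. -/
def UndetError {n : ℕ} (S : Set (Pauli n)) (l e : Pauli n) : Prop :=
  (∀ s ∈ S, PComm e s) ∧ ¬ PComm e l

/-- `ω S l`: minimum weight of an undetectable error w.r.t. `S` acting on `l`. -/
noncomputable def ω {n : ℕ} (S : Set (Pauli n)) (l : Pauli n) : ℕ :=
  sInf (weight '' {e | UndetError S l e})

/-- Single-qubit Pauli X on qubit `k`. -/
def Xk {n : ℕ} (k : Fin n) : Pauli n := fun i => if i = k then (1, 0) else 0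

/-- Single-qubit Pauli Z on qubit `k`. -/
def Zk {n : ℕ} (k : Fin n) : Pauli n := fun i => if i = k then (0, 1) else 0

/-- `Pk k false = X_k`, `Pk k true = Z_k`. -/
def Pk {n : ℕ} (k : Fin n) (p : Bool) : Pauli n := if p then Zk k else Xk k

/-- A finite set of Pauli operators is independent if no member is a product of the others. -/
def IndepSet {n : ℕ} (T : Finset (Pauli n)) : Prop :=
  ∀ t ∈ T, t ∉ AddSubgroup.closure ((T.erase t : Finset (Pauli n)) : Set (Pauli n))

/-- `O` is an unimprovable set with respect to `S`. -/
def Unimprovable {n : ℕ} (S : Set (Pauli n)) (O : Finset (Pauli n)) : Prop :=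
  ∀ X ⊆ O, ∀ h : X.Nonempty, ω S (∑ x ∈ X, x) = X.inf' h (fun x => ω S x)

/-- The unimprovable set `O` extends to `Q` (with respect to `S`). -/
def ExtendsTo {n : ℕ} (S : Set (Pauli n)) (O Q : Finset (Pauli n)) : Prop :=
  ∀ R ⊆ O ∪ Q, ∀ h : (R ∩ O).Nonempty,
    ω S (∑ x ∈ R, x) ≤ (R ∩ O).inf' h (fun x => ω S x)

end Pauli

namespace Pauli

/-- A pseudo-generator is a set of 1 or 2 Pauli operators. -/
def IsPseudoGen {n : ℕ} (g : Finset (Pauli n)) : Prop := g.card = 1 ∨ g.card = 2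

/-- The pseudo-product of the pseudo-generators in `H`: all products obtained by choosing
one non-identity element of the group generated by each pseudo-generator. -/
def pseudoProd {n : ℕ} (H : Finset (Finset (Pauli n))) : Set (Pauli n) :=
  {o | ∃ f : Finset (Pauli n) → Pauli n,
    (∀ g ∈ H, f g ∈ AddSubgroup.closure (g : Set (Pauli n)) ∧ f g ≠ 0) ∧
    o = ∑ g ∈ H, f g}

/-- A set of pseudo-generators is disjoint: for each `g` there is a qubit `k` such that
either `X_k` or `Z_k` anti-commutes with every non-identity element of `⟨g⟩`, while both
`X_k` and `Z_k` commute with everything generated by each other pseudo-generator. -/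
def DisjointPG {n : ℕ} (G : Finset (Finset (Pauli n))) : Prop :=
  ∀ g ∈ G, ∃ k : Fin n,
    ((∀ o ∈ AddSubgroup.closure (g : Set (Pauli n)), o ≠ 0 → ¬ PComm (Xk k) o) ∨
     (∀ o ∈ AddSubgroup.closure (g : Set (Pauli n)), o ≠ 0 → ¬ PComm (Zk k) o)) ∧
    (∀ g' ∈ G, g' ≠ g → ∀ o ∈ AddSubgroup.closure ((g' : Finset (Pauli n)) : Set (Pauli n)),
      PComm (Xk k) o ∧ PComm (Zk k) o)

end Pauli

section Aux

open Pauli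

lemma pauli_add_self {n : ℕ} (v : Pauli n) : v + v = 0 := by
  funext i
  simpa using (by decide : ∀ p : ZMod 2 × ZMod 2, p + p = 0) (v i)

lemma sform_add_left {n : ℕ} (a b c : Pauli n) :
    sform (a + b) c = sform a c + sform b c := by
  simp only [sform, Pi.add_apply, Prod.fst_add, Prod.snd_add]
  rw [← Finset.sum_add_distrib]
  exact Finset.sum_congr rfl fun i _ => by ring

lemma sform_add_right {n : ℕ} (a b c : Pauli n) :
    sform a (b + c) = sform a b + sform a c := by
  simp only [sform, Pi.add_apply, Prod.fst_add, Prod.snd_add]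
  rw [← Finset.sum_add_distrib]
  exact Finset.sum_congr rfl fun i _ => by ring

lemma sform_smul_left {n : ℕ} (r : ZMod 2) (a c : Pauli n) :
    sform (r • a) c = r * sform a c := by
  simp only [sform, Pi.smul_apply, Prod.smul_fst, Prod.smul_snd, smul_eq_mul]
  rw [Finset.mul_sum]
  exact Finset.sum_congr rfl fun i _ => by ring

lemma sform_smul_right {n : ℕ} (r : ZMod 2) (a c : Pauli n) :
    sform a (r • c) = r * sform a c := by
  simp only [sform, Pi.smul_apply, Prod.smul_fst, Prod.smul_snd, smul_eq_mul]
  rw [Finset.mul_sum]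
  exact Finset.sum_congr rfl fun i _ => by ring

/-- The symplectic form as a bilinear map. -/
noncomputable def Blin {n : ℕ} : Pauli n →ₗ[ZMod 2] Pauli n →ₗ[ZMod 2] ZMod 2 :=
  LinearMap.mk₂ (ZMod 2) sform sform_add_left sform_smul_left
    sform_add_right sform_smul_right

@[simp] lemma Blin_apply {n : ℕ} (a b : Pauli n) : Blin a b = sform a b := rfl

lemma closure_eq_span {n : ℕ} (s : Set (Pauli n)) :
    (AddSubgroup.closure s : Set (Pauli n)) =
      (Submodule.span (ZMod 2) s : Set (Pauli n)) := by
  apply Set.Subset.antisymm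
  · exact (AddSubgroup.closure_le ((Submodule.span (ZMod 2) s).toAddSubgroup)).mpr
      Submodule.subset_span
  · intro x hx
    induction hx using Submodule.span_induction with
    | mem x hxs => exact AddSubgroup.subset_closure hxs
    | zero => exact (AddSubgroup.closure s).zero_mem
    | add x y _ _ hx hy => exact (AddSubgroup.closure s).add_mem hx hy
    | smul r x _ hx =>
      rcases (by decide : ∀ r : ZMod 2, r = 0 ∨ r = 1) r with rfl | rfl
      · simpa using (AddSubgroup.closure s).zero_mem
      · simpa using hx

lemma zmod2_eq_one {c : ZMod 2} (h : c ≠ 0) : c = 1 := by revert c h; decide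

lemma zmod2_one_add_one_ne : ((1 : ZMod 2) + 1 = 1) → False := by decide

lemma finrank_pauli (N : ℕ) :
    Module.finrank (ZMod 2) (Pauli N) = 2 * N := by
  haveI : Fact (Nat.Prime 2) := ⟨Nat.prime_two⟩
  rw [Module.finrank_pi_fintype]
  simp [Module.finrank_prod, mul_comm]

end Aux

/-- If a disjoint set of pseudo-generators generates exactly the centralizer of a
set of commuting Pauli operators on `N` qubits, then it has exactly `N` elements. -/
theorem stmt8 {N : ℕ} (S : Set (Pauli N)) (hS : ∀ s ∈ S, ∀ s' ∈ S, Pauli.PComm s s')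
    (G : Finset (Finset (Pauli N)))
    (hpg : ∀ g ∈ G, Pauli.IsPseudoGen g) (hdisj : Pauli.DisjointPG G)
    (hgen : (AddSubgroup.closure ((G.biUnion id : Finset (Pauli N)) : Set (Pauli N)) :
        Set (Pauli N)) = {p | ∀ s ∈ S, Pauli.PComm p s}) :
    G.card = N := by
  classical
  haveI : Fact (Nat.Prime 2) := ⟨Nat.prime_two⟩
  -- dispose of the trivial case N = 0
  rcases Nat.eq_zero_or_pos N with rfl | hNpos
  · have hGempty : G = ∅ := Finset.eq_empty_of_forall_notMem fun g hg => by
      obtain ⟨k, _⟩ := hdisj g hg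
      exact k.elim0
    simp [hGempty]
  haveI : Nonempty (Fin N) := ⟨⟨0, hNpos⟩⟩
  -- choose the special qubit of each pseudo-generator
  choose κ hκ1 hκ2 using hdisj
  set κt : Finset (Pauli N) → Fin N :=
    fun g => if h : g ∈ G then κ g h else Classical.arbitrary _ with hκt
  -- uniqueness of the nonzero element of each ⟨g⟩
  have huniq : ∀ g ∈ G, ∀ x ∈ AddSubgroup.closure ((g : Finset (Pauli N)) : Set (Pauli N)),
      ∀ y ∈ AddSubgroup.closure ((g : Finset (Pauli N)) : Set (Pauli N)),
      x ≠ 0 → y ≠ 0 → x = y := by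
    intro g hg x hx y hy hx0 hy0
    by_contra hxy
    have hxy0 : x + y ≠ 0 := by
      intro h0
      apply hxy
      have h1 : x + y + y = 0 + y := by rw [h0]
      rwa [add_assoc, pauli_add_self, add_zero, zero_add] at h1
    have hsum : x + y ∈ AddSubgroup.closure ((g : Finset (Pauli N)) : Set (Pauli N)) :=
      AddSubgroup.add_mem _ hx hy
    have key : ∀ P : Pauli N,
        (∀ o ∈ AddSubgroup.closure ((g : Finset (Pauli N)) : Set (Pauli N)),
          o ≠ 0 → ¬ Pauli.PComm P o) → False := by
      intro P hP
      have h1 : Pauli.sform P x = 1 := zmod2_eq_one (hP x hx hx0)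
      have h2 : Pauli.sform P y = 1 := zmod2_eq_one (hP y hy hy0)
      have h3 : Pauli.sform P (x + y) = 1 := zmod2_eq_one (hP (x + y) hsum hxy0)
      rw [sform_add_right, h1, h2] at h3
      exact zmod2_one_add_one_ne h3
    rcases hκ1 g hg with h | h
    · exact key _ h
    · exact key _ h
  -- the group generated by G as a ZMod 2 submodule
  set W : Submodule (ZMod 2) (Pauli N) :=
    Submodule.span (ZMod 2) ((G.biUnion id : Finset (Pauli N)) : Set (Pauli N)) with hWdef
  have hWset : (W : Set (Pauli N)) = {p | ∀ s ∈ S, Pauli.PComm p s} := by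
    rw [hWdef, ← closure_eq_span, hgen]
  -- span of S
  set VS : Submodule (ZMod 2) (Pauli N) := Submodule.span (ZMod 2) S with hVSdef
  have hVSW : VS ≤ W := by
    rw [hVSdef]
    apply Submodule.span_le.mpr
    intro s hs
    show s ∈ (W : Set (Pauli N))
    rw [hWset]
    exact fun s' hs' => hS s hs s' hs'
  -- the map v ↦ (s ↦ sform v s) on VS
  set Φ : Pauli N →ₗ[ZMod 2] Module.Dual (ZMod 2) VS :=
    { toFun := fun v => (Blin v).comp VS.subtype
      map_add' := fun u v => by ext s; simp [sform_add_left]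
      map_smul' := fun r v => by ext s; simp [sform_smul_left] } with hΦdef
  have hkerW : LinearMap.ker Φ ≤ W := by
    intro v hv
    have hv' : ∀ s : VS, Pauli.sform v (s : Pauli N) = 0 := by
      intro s
      have := LinearMap.ext_iff.mp (LinearMap.mem_ker.mp hv) s
      simpa [hΦdef] using this
    show v ∈ (W : Set (Pauli N))
    rw [hWset]
    intro s hs
    exact hv' ⟨s, Submodule.subset_span hs⟩
  -- rank computations : N ≤ finrank W
  have hrank : Module.finrank (ZMod 2) (LinearMap.range Φ)
      + Module.finrank (ZMod 2) (LinearMap.ker Φ) = 2 * N := by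
    rw [LinearMap.finrank_range_add_finrank_ker, finrank_pauli]
  have hrange : Module.finrank (ZMod 2) (LinearMap.range Φ)
      ≤ Module.finrank (ZMod 2) VS := by
    calc Module.finrank (ZMod 2) (LinearMap.range Φ)
        ≤ Module.finrank (ZMod 2) (Module.Dual (ZMod 2) VS) := Submodule.finrank_le _
      _ = Module.finrank (ZMod 2) VS := Subspace.dual_finrank_eq
  have hVSleW : Module.finrank (ZMod 2) VS ≤ Module.finrank (ZMod 2) W :=
    Submodule.finrank_mono hVSW
  have hkerleW : Module.finrank (ZMod 2) (LinearMap.ker Φ) ≤ Module.finrank (ZMod 2) W :=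
    Submodule.finrank_mono hkerW
  have hNle : N ≤ Module.finrank (ZMod 2) W := by omega
  -- the nonzero pseudo-generators
  set Gnz : Finset (Finset (Pauli N)) := G.filter (fun g => ∃ x ∈ g, x ≠ 0) with hGnz
  -- W is spanned by the set of nonzero elements of members of Gnz
  set A : Finset (Pauli N) := Gnz.biUnion (fun g => g.filter (fun x => x ≠ 0)) with hA
  have hWleA : W ≤ Submodule.span (ZMod 2) (A : Set (Pauli N)) := by
    rw [hWdef]
    apply Submodule.span_le.mpr
    intro x hx
    rw [Finset.coe_biUnion] at hx
    simp only [Set.mem_iUnion] at hx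
    obtain ⟨g, hg, hxg⟩ := hx
    simp only [id] at hxg
    by_cases hx0 : x = 0
    · rw [hx0]
      exact Submodule.zero_mem _
    · apply Submodule.subset_span
      have hgnz : g ∈ Gnz := by
        rw [hGnz, Finset.mem_filter]
        exact ⟨hg, x, hxg, hx0⟩
      rw [hA, Finset.coe_biUnion]
      simp only [Set.mem_iUnion]
      exact ⟨g, hgnz, by simp [Finset.mem_filter, Finset.mem_coe.mp hxg, hx0]⟩
  have hAcard : A.card ≤ Gnz.card := by
    calc A.card ≤ ∑ g ∈ Gnz, (g.filter (fun x => x ≠ 0)).card := Finset.card_biUnion_le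
      _ ≤ ∑ _g ∈ Gnz, 1 := by
          apply Finset.sum_le_sum
          intro g hg
          have hgG : g ∈ G := (Finset.mem_filter.mp hg).1
          apply Finset.card_le_one.mpr
          intro a ha b hb
          simp only [Finset.mem_filter] at ha hb
          exact huniq g hgG a (AddSubgroup.subset_closure ha.1) b
            (AddSubgroup.subset_closure hb.1) ha.2 hb.2
      _ = Gnz.card := by simp
  have hWle : Module.finrank (ZMod 2) W ≤ Gnz.card := by
    calc Module.finrank (ZMod 2) W
        ≤ Module.finrank (ZMod 2) (Submodule.span (ZMod 2) (A : Set (Pauli N))) :=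
          Submodule.finrank_mono hWleA
      _ ≤ A.card := finrank_span_finset_le_card A
      _ ≤ Gnz.card := hAcard
  -- injectivity of the qubit map on Gnz
  have hinj : Set.InjOn κt Gnz := by
    intro g hg g' hg' hkk
    by_contra hne
    simp only [hGnz, Finset.coe_filter, Set.mem_setOf_eq] at hg hg'
    obtain ⟨hgG, hgnz⟩ := hg
    obtain ⟨hg'G, ⟨a, ha, ha0⟩⟩ := hg'
    have hkt : κt g = κ g hgG := by rw [hκt]; exact dif_pos hgG
    have hkt' : κt g' = κ g' hg'G := by rw [hκt]; exact dif_pos hg'G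
    have haC : a ∈ AddSubgroup.closure ((g' : Finset (Pauli N)) : Set (Pauli N)) :=
      AddSubgroup.subset_closure ha
    have hcomm := hκ2 g hgG g' hg'G (fun h => hne h.symm) a haC
    rcases hκ1 g' hg'G with h | h
    · exact h a haC ha0 (by rw [← hkt', ← hkk, hkt]; exact hcomm.1)
    · exact h a haC ha0 (by rw [← hkt', ← hkk, hkt]; exact hcomm.2)
  have hGnzle : Gnz.card ≤ N := by
    have := Finset.card_le_card_of_injOn κt (fun a _ => Finset.mem_univ (κt a)) hinj
    simpa using this
  have hGnzcard : Gnz.card = N := le_antisymm hGnzle (hNle.trans hWle)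
  -- the image of Gnz under κt is all of Fin N
  have himage : Gnz.image κt = Finset.univ := by
    apply Finset.eq_univ_of_card
    rw [Finset.card_image_of_injOn hinj, hGnzcard, Fintype.card_fin]
  -- every pseudo-generator has a nonzero element
  have hall : ∀ g ∈ G, ∃ x ∈ g, x ≠ 0 := by
    intro g0 hg0
    by_contra hno
    have hg0nz : g0 ∉ Gnz := by
      simp only [hGnz, Finset.mem_filter, not_and]
      exact fun _ => hno
    have hk0 : κt g0 ∈ Gnz.image κt := by rw [himage]; exact Finset.mem_univ _
    obtain ⟨g', hg', hkk⟩ := Finset.mem_image.mp hk0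
    have hg'G : g' ∈ G := (Finset.mem_filter.mp hg').1
    obtain ⟨a, ha, ha0⟩ := (Finset.mem_filter.mp hg').2
    have hne : g' ≠ g0 := fun h => hg0nz (h ▸ hg')
    have hkt : κt g0 = κ g0 hg0 := by rw [hκt]; exact dif_pos hg0
    have hkt' : κt g' = κ g' hg'G := by rw [hκt]; exact dif_pos hg'G
    have haC : a ∈ AddSubgroup.closure ((g' : Finset (Pauli N)) : Set (Pauli N)) :=
      AddSubgroup.subset_closure ha
    have hcomm := hκ2 g0 hg0 g' hg'G hne a haC
    rcases hκ1 g' hg'G with h | h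
    · exact h a haC ha0 (by rw [← hkt', hkk, hkt]; exact hcomm.1)
    · exact h a haC ha0 (by rw [← hkt', hkk, hkt]; exact hcomm.2)
  have hGeq : Gnz = G := by
    rw [hGnz]
    exact Finset.filter_true_of_mem hall
  rw [← hGeq]
  exact hGnzcard
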